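/- In F the identity c − b·d + a'·(b·e − c·c') = (x₁²·x₃·x₅·x₈ + x₆·(x₀·x₂+x₇)·(x₂·x₄+x₈) + x₁·(x₂·x₄·x₆ + (x₆+x₃·x₅·x₇)·x₈))/(x₀·x₁·x₂·x₃) holds; that is, the cluster variable x[α₀+α₁+α₂+α₃] equals the stated polynomial in the nine generators a, a', b, c, c', d, d', e, f. -/

import Mathlib

noncomputable section

/-- The field `F = Frac(ℤ[x₀,…,x₈])`. -/
abbrev F : Type := FractionRing (MvPolynomial (Fin 9) ℤ)

/-- The images of the indeterminates `x₀,…,x₈` in `F`. -/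
def x (i : Fin 9) : F := algebraMap (MvPolynomial (Fin 9) ℤ) F (MvPolynomial.X i)

def a : F := x 0
def a' : F := x 4
def b : F := x 5
def c : F := (x 1 + x 0 * x 2 + x 7) / (x 0 * x 1)
def c' : F := (x 3 + x 2 * x 4 + x 8) / (x 3 * x 4)
def f : F := (x 2 + x 1 * x 3 * x 5 + x 6) / (x 2 * x 5)
def d : F :=
  ((x 1) ^ 2 * x 3 * x 5 + (x 2 + x 6) * (x 0 * x 2 + x 7)
      + x 1 * (x 2 + x 6 + x 3 * x 5 * x 7)) / (x 0 * x 1 * x 2 * x 5)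
def d' : F :=
  ((x 2) ^ 2 * x 4 + (x 1 * x 3 * x 5 + x 6) * (x 3 + x 8)
      + x 2 * (x 3 + x 4 * x 6 + x 8)) / (x 2 * x 3 * x 4 * x 5)
def e : F :=
  ((x 1) ^ 2 * x 3 * x 5 * (x 3 + x 8)
      + (x 2 + x 6) * (x 0 * x 2 + x 7) * (x 3 + x 2 * x 4 + x 8)
      + x 1 * ((x 2) ^ 2 * x 4 + (x 6 + x 3 * x 5 * x 7) * (x 3 + x 8)
          + x 2 * (x 3 + x 4 * x 6 + x 8))) / (x 0 * x 1 * x 2 * x 3 * x 4 * x 5)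

theorem x_ne_zero (i : Fin 9) : x i ≠ 0 :=
  (IsFractionRing.injective (MvPolynomial (Fin 9) ℤ) F).ne_iff' (map_zero _) |>.mpr
    (MvPolynomial.X_ne_zero i)

theorem stmt15 :
    c - b * d + a' * (b * e - c * c')
      = ((x 1) ^ 2 * x 3 * x 5 * x 8
          + x 6 * (x 0 * x 2 + x 7) * (x 2 * x 4 + x 8)
          + x 1 * (x 2 * x 4 * x 6 + (x 6 + x 3 * x 5 * x 7) * x 8))
        / (x 0 * x 1 * x 2 * x 3) := by
  simp only [a', b, c, c', d, e]
  field_simp [x_ne_zero]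
  ring
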